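/- arXiv:2312.12206 — 4 statements merged into one kernel-verified Lean document; each statement's English description precedes it below -/
import Mathlib

section
/- Let X and ε be independent random variables, Y = f(X) + ε, and R a binary variable whose conditional distribution satisfies P(R = 0 | X, ε) = g(X) (selection depends on the cause only). Then conditional on {R = 0}, ε is independent of X, i.e., the additive noise model remains identifiable under cause-dependent selection: the joint law of (X, Y) given R = 0 satisfies P(Y ∈ B | X = x, R = 0) = P(f(x) + ε ∈ B) for almost every x with g(x) > 0. -/
open MeasureTheory ProbabilityTheory
open scoped ENNReal

/-- Cause-dependent selection preserves the additive noise model: if the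
selection probability of R = 0 depends on the cause X only, then conditional
on R = 0 the residual Y - f(X) is independent of X and its law equals the
original law of the noise (so the conditional law of Y given X = x and R = 0
is the law of f(x) + ε). -/
theorem cause_dependent_selection_preserves_anm
    {Ω : Type*} [MeasurableSpace Ω] (μ : Measure Ω) [IsProbabilityMeasure μ]
    (X ε : Ω → ℝ) (hX : Measurable X) (hε : Measurable ε)
    (hind : IndepFun X ε μ)
    (f g : ℝ → ℝ) (hf : Measurable f) (hg : Measurable g)
    (Y : Ω → ℝ) (hY : ∀ ω, Y ω = f (X ω) + ε ω)
    (R0 : Set Ω) (hR0 : MeasurableSet R0) (hR0pos : μ R0 ≠ 0)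
    (hcond : ∀ A B : Set ℝ, MeasurableSet A → MeasurableSet B →
      μ (R0 ∩ X ⁻¹' A ∩ ε ⁻¹' B) =
        ∫⁻ ω in X ⁻¹' A ∩ ε ⁻¹' B, ENNReal.ofReal (g (X ω)) ∂μ) :
    IndepFun X (fun ω => Y ω - f (X ω)) (μ[|R0]) ∧
      (μ[|R0]).map (fun ω => Y ω - f (X ω)) = μ.map ε := by
  have hres : (fun ω => Y ω - f (X ω)) = ε := by
    funext ω; rw [hY ω]; ring
  -- factorization of the key integral
  have key : ∀ A B : Set ℝ, MeasurableSet A → MeasurableSet B →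
      (∫⁻ ω in X ⁻¹' A ∩ ε ⁻¹' B, ENNReal.ofReal (g (X ω)) ∂μ) =
        (∫⁻ ω in X ⁻¹' A, ENNReal.ofReal (g (X ω)) ∂μ) * μ (ε ⁻¹' B) := by
    intro A B hA hB
    set φ : ℝ → ℝ≥0∞ := fun x => ENNReal.ofReal (g x) * A.indicator 1 x with hφ
    set ψ : ℝ → ℝ≥0∞ := B.indicator 1 with hψ
    have hφm : Measurable φ := (hg.ennreal_ofReal).mul (measurable_one.indicator hA)
    have hψm : Measurable ψ := measurable_one.indicator hB
    have hindc : IndepFun (φ ∘ X) (ψ ∘ ε) μ := hind.comp hφm hψm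
    have hmul := lintegral_mul_eq_lintegral_mul_lintegral_of_indepFun
      (hφm.comp hX) (hψm.comp hε) hindc
    have h1 : (∫⁻ ω, ((φ ∘ X) * (ψ ∘ ε)) ω ∂μ)
        = ∫⁻ ω in X ⁻¹' A ∩ ε ⁻¹' B, ENNReal.ofReal (g (X ω)) ∂μ := by
      rw [← lintegral_indicator (hA.preimage hX |>.inter (hB.preimage hε))]
      congr 1
      funext ω
      by_cases hx : X ω ∈ A <;> by_cases he : ε ω ∈ B <;>
        simp [φ, ψ, Set.indicator_apply, hx, he]
    have h2 : (∫⁻ ω, (φ ∘ X) ω ∂μ)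
        = ∫⁻ ω in X ⁻¹' A, ENNReal.ofReal (g (X ω)) ∂μ := by
      rw [← lintegral_indicator (hA.preimage hX)]
      congr 1
      funext ω
      by_cases hx : X ω ∈ A <;> simp [φ, Set.indicator_apply, hx]
    have h3 : (∫⁻ ω, (ψ ∘ ε) ω ∂μ) = μ (ε ⁻¹' B) := by
      have heq : (ψ ∘ ε) = (ε ⁻¹' B).indicator (1 : Ω → ℝ≥0∞) := by
        funext ω
        by_cases he : ε ω ∈ B <;> simp [ψ, Set.indicator_apply, he]
      rw [heq, lintegral_indicator_one (hB.preimage hε)]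
    rw [← h1, hmul, h2, h3]
  have htot : (∫⁻ ω, ENNReal.ofReal (g (X ω)) ∂μ) = μ R0 := by
    have := hcond Set.univ Set.univ MeasurableSet.univ MeasurableSet.univ
    simpa using this.symm
  have hR0fin : μ R0 ≠ ⊤ := (measure_lt_top μ R0).ne
  -- conditional measure of ε-events equals original
  have hεcond : ∀ B : Set ℝ, MeasurableSet B → (μ[|R0]) (ε ⁻¹' B) = μ (ε ⁻¹' B) := by
    intro B hB
    rw [cond_apply hR0]
    have h := hcond Set.univ B MeasurableSet.univ hB
    simp only [Set.preimage_univ, Set.inter_univ, Set.univ_inter] at h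
    have k := key Set.univ B MeasurableSet.univ hB
    simp only [Set.preimage_univ, Set.univ_inter, Measure.restrict_univ] at k
    rw [h, k, htot, ← mul_assoc, ENNReal.inv_mul_cancel hR0pos hR0fin, one_mul]
  have hXcond : ∀ A : Set ℝ, MeasurableSet A →
      (μ[|R0]) (X ⁻¹' A) = (μ R0)⁻¹ * ∫⁻ ω in X ⁻¹' A, ENNReal.ofReal (g (X ω)) ∂μ := by
    intro A hA
    rw [cond_apply hR0]
    have h := hcond A Set.univ hA MeasurableSet.univ
    simp only [Set.preimage_univ, Set.inter_univ] at h
    rw [h]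
  have hprod : ∀ A B : Set ℝ, MeasurableSet A → MeasurableSet B →
      (μ[|R0]) (X ⁻¹' A ∩ ε ⁻¹' B) = (μ[|R0]) (X ⁻¹' A) * (μ[|R0]) (ε ⁻¹' B) := by
    intro A B hA hB
    rw [cond_apply hR0, ← Set.inter_assoc, hcond A B hA hB, key A B hA hB,
      hXcond A hA, hεcond B hB, mul_assoc]
  constructor
  · rw [hres]
    exact indepFun_iff_measure_inter_preimage_eq_mul.2 fun A B hA hB => hprod A B hA hB
  · rw [hres]
    refine Measure.ext fun B hB => ?_
    rw [Measure.map_apply hε hB, Measure.map_apply hε hB, hεcond B hB]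
end

section
/- Let G be a DAG. Suppose vertex r is a leaf with unique parent v, and suppose there exist X, Y and a set Z with v ∈ Z, X, Y ∉ Z ∪ {r}, such that X ⊥_d Y | Z. Then X ⊥_d Y | Z ∪ {r}. In contrast, if r were instead a vertex with at least two parents including ancestors of both X and Y via Z-avoiding directed paths, then X and Y would be d-connected given Z ∪ {r}. -/
variable {V : Type*}

/-- Nontrivial directed reachability in a directed graph `G`. -/
def Reach (G : V → V → Prop) : V → V → Prop := Relation.TransGen G

/-- `G` is a directed acyclic graph. -/
def IsDAG (G : V → V → Prop) : Prop := ∀ v, ¬ Reach G v v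

/-- Adjacency in either direction. -/
def GAdj (G : V → V → Prop) (a b : V) : Prop := G a b ∨ G b a

/-- `p` is a path from `X` to `Y`: a sequence of distinct vertices in which
consecutive vertices are joined by an edge (in either direction). -/
structure IsPath (G : V → V → Prop) (p : List V) (X Y : V) : Prop where
  nodup : p.Nodup
  head : p.head? = some X
  last : p.getLast? = some Y
  chain : p.Chain' (GAdj G)

/-- `r` is a collider on the path `p` (both incident path edges point into `r`). -/
def IsColliderOn (G : V → V → Prop) (p : List V) (r : V) : Prop :=
  ∃ a b, [a, r, b] <:+: p ∧ G a r ∧ G b r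

/-- The path `p` is active (d-connecting) given the conditioning set `W`:
every interior collider is in `W` or has a descendant in `W`, and every
interior non-collider is outside `W`. -/
def ActiveGiven (G : V → V → Prop) (p : List V) (W : Set V) : Prop :=
  ∀ a v b, [a, v, b] <:+: p →
    ((G a v ∧ G b v) → (v ∈ W ∨ ∃ d, Reach G v d ∧ d ∈ W)) ∧
    (¬ (G a v ∧ G b v) → v ∉ W)

/-- `X` and `Y` are d-separated by `W`: every path between them is blocked. -/
def DSep (G : V → V → Prop) (X Y : V) (W : Set V) : Prop :=
  ∀ p, IsPath G p X Y → ¬ ActiveGiven G p W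

/-- A leaf: a vertex with no children (no outgoing edges). -/
def IsLeaf (G : V → V → Prop) (r : V) : Prop := ∀ w, ¬ G r w

/-- `v` is the unique parent of `r`. -/
def UniqueParent (G : V → V → Prop) (v r : V) : Prop :=
  G v r ∧ ∀ u, G u r → u = v

/-- A directed path from `X` to `r` whose interior vertices avoid `Z`. -/
def DirPathAvoid (G : V → V → Prop) (Z : Set V) (X r : V) : Prop :=
  ∃ p : List V, p.Chain' G ∧ p.head? = some X ∧ p.getLast? = some r ∧
    ∀ v ∈ p, v ≠ X → v ≠ r → v ∉ Z

/-!
Conditioning on a leaf `r` whose only parent `v` is already conditioned on changes nothing: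
`r` cannot be interior to a path, since both of its path-neighbors would be its parent `v`,
and a collider with descendant `r` is `v` itself or an ancestor of `v`.

Conversely, the two `Z`-avoiding directed paths into `r'` join into a walk from `X` to `Y`;
erasing its loops leaves a path all of whose vertices are ancestors of `r'`. Every collider on it
is therefore activated by `r'`, while a non-collider has a child on the path, so acyclicity
forbids it to be `r'`, and it lies off `Z` because it is interior to one of the two directed paths.
-/

open Relation

section

variable {G : V → V → Prop}

namespace List

theorem ne_of_infix_of_head?_eq {l : List V} {x a u : V} (hl : l.Nodup)
    (hx : l.head? = some x) (h : [a, u] <:+: l) : u ≠ x := by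
  obtain ⟨t, rfl⟩ := head?_eq_some_iff.1 hx
  have hut : u ∈ t := by
    rcases infix_cons_iff.1 h with hpre | hinf
    · exact (cons_prefix_cons.1 hpre).2.subset (by simp)
    · exact hinf.subset (by simp)
  exact fun hux => (nodup_cons.1 hl).1 (hux ▸ hut)

theorem ne_of_infix_of_getLast?_eq {l : List V} {y u b : V} (hl : l.Nodup)
    (hy : l.getLast? = some y) (h : [u, b] <:+: l) : u ≠ y :=
  ne_of_infix_of_head?_eq (a := b) (nodup_reverse.2 hl) (by rwa [head?_reverse])
    (by simpa using h.reverse)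

theorem exists_infix_of_mem {l : List V} {x : V} (hx : x ∈ l) (hh : l.head? ≠ some x)
    (hl : l.getLast? ≠ some x) : ∃ a b, [a, x, b] <:+: l := by
  obtain ⟨s, t, rfl⟩ := append_of_mem hx
  rcases s.eq_nil_or_concat with rfl | ⟨s, a, rfl⟩
  · simp at hh
  rcases t with _ | ⟨b, t⟩
  · simp at hl
  exact ⟨a, b, s, t, by simp⟩

theorem IsChain.reflTransGen_of_mem {q : List V} (hc : q.IsChain G) {r u : V}
    (hr : q.getLast? = some r) (hu : u ∈ q) : ReflTransGen G u r :=
  hc.backwards_induction (ReflTransGen G · r) q (fun _ _ h hy => ReflTransGen.head h hy)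
    (fun hne => by rw [getLast?_eq_some_getLast hne] at hr; rw [Option.some_inj.1 hr]) u hu

end List

theorem IsPath.ne_left_of_infix {p : List V} {X Y a u b : V} (hp : IsPath G p X Y)
    (h : [a, u, b] <:+: p) : u ≠ X :=
  List.ne_of_infix_of_head?_eq hp.nodup hp.head ((List.infix_append [] [a, u] [b]).trans h)

theorem IsPath.ne_right_of_infix {p : List V} {X Y a u b : V} (hp : IsPath G p X Y)
    (h : [a, u, b] <:+: p) : u ≠ Y :=
  List.ne_of_infix_of_getLast?_eq hp.nodup hp.last ((List.infix_append [a] [u, b] []).trans h)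

theorem IsPath.notMem_of_isLeaf {p : List V} {X Y r v : V} (hp : IsPath G p X Y)
    (hleaf : IsLeaf G r) (hpar : ∀ u, G u r → u = v) (hX : r ≠ X) (hY : r ≠ Y) : r ∉ p := by
  intro hr
  obtain ⟨a, b, hab⟩ := List.exists_infix_of_mem hr (by simpa [hp.head] using hX.symm)
    (by simpa [hp.last] using hY.symm)
  have hadj : GAdj G a r ∧ GAdj G r b := by simpa using hp.chain.infix hab
  have hne : (a ≠ r ∧ a ≠ b) ∧ r ≠ b := by simpa using hab.nodup hp.nodup
  exact hne.1.2 ((hpar a (hadj.1.resolve_right (hleaf a))).trans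
    (hpar b (hadj.2.resolve_left (hleaf b))).symm)

theorem UniqueParent.mem_or_reach_of_reach {W : Set V} {u v r : V} (hpar : UniqueParent G v r)
    (hv : v ∈ W) (h : Reach G u r) : u ∈ W ∨ ∃ d, Reach G u d ∧ d ∈ W := by
  obtain ⟨b, hub, hbr⟩ := TransGen.tail'_iff.1 h
  obtain rfl := hpar.2 b hbr
  rcases reflTransGen_iff_eq_or_transGen.1 hub with rfl | huv
  · exact Or.inl hv
  · exact Or.inr ⟨b, huv, hv⟩

theorem ActiveGiven.of_union_singleton {p : List V} {W : Set V} {r : V}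
    (h : ActiveGiven G p (W ∪ {r})) (hr : r ∉ p)
    (hanc : ∀ u, Reach G u r → u ∈ W ∨ ∃ d, Reach G u d ∧ d ∈ W) : ActiveGiven G p W := by
  intro a u b hab
  have hur : u ≠ r := fun hur => hr (hur ▸ hab.subset (by simp))
  refine ⟨fun hcol => ?_, fun hncol huW => (h a u b hab).2 hncol (Or.inl huW)⟩
  rcases (h a u b hab).1 hcol with (hu | hu) | ⟨d, hud, hd | rfl⟩
  · exact Or.inl hu
  · exact absurd hu hur
  · exact Or.inr ⟨d, hud, hd⟩
  · exact hanc u hud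

theorem dSep_union_singleton_of_isLeaf {X Y r v : V} {Z : Set V} (hleaf : IsLeaf G r)
    (hpar : UniqueParent G v r) (hv : v ∈ Z) (hX : r ≠ X) (hY : r ≠ Y)
    (hsep : DSep G X Y Z) : DSep G X Y (Z ∪ {r}) := fun p hp hact =>
  hsep p hp <| hact.of_union_singleton (hp.notMem_of_isLeaf hleaf hpar.2 hX hY)
    fun _ hu => hpar.mem_or_reach_of_reach hv hu

theorem exists_isPath_subset_of_isChain {l : List V} (hc : l.IsChain (GAdj G)) {X Y : V}
    (hX : l.head? = some X) (hY : l.getLast? = some Y) : ∃ p, IsPath G p X Y ∧ p ⊆ l := by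
  induction l generalizing X with
  | nil => simp at hX
  | cons x t ih =>
    obtain rfl : x = X := by simpa using hX
    rcases t with _ | ⟨c, t⟩
    · obtain rfl : x = Y := by simpa using hY
      exact ⟨[x], ⟨by simp, rfl, rfl, List.isChain_singleton x⟩, List.Subset.refl _⟩
    obtain ⟨hxc, hct⟩ := List.isChain_cons_cons.1 hc
    obtain ⟨p, hp, hpt⟩ := ih hct rfl (by simpa using hY)
    by_cases hxp : x ∈ p
    · obtain ⟨s, m, rfl⟩ := List.append_of_mem hxp
      refine ⟨x :: m, ⟨hp.nodup.sublist (List.sublist_append_right s _), rfl, ?_,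
        hp.chain.infix (List.suffix_append s _).isInfix⟩, ?_⟩
      · rw [← hp.last, List.getLast?_append_cons]
      · exact List.cons_subset_cons x fun y hy => hpt (by simp [hy])
    · obtain ⟨p', rfl⟩ := List.head?_eq_some_iff.1 hp.head
      refine ⟨x :: c :: p', ⟨List.nodup_cons.2 ⟨hxp, hp.nodup⟩, rfl, ?_,
        List.isChain_cons_cons.2 ⟨hxc, hp.chain⟩⟩, List.cons_subset_cons x hpt⟩
      simpa using hp.last

theorem IsPath.exists_out_neighbor {p : List V} {X Y a u b : V} (hp : IsPath G p X Y)
    (hab : [a, u, b] <:+: p) (hncol : ¬ (G a u ∧ G b u)) : ∃ c ∈ p, G u c := by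
  have hadj : GAdj G a u ∧ GAdj G u b := by simpa using hp.chain.infix hab
  by_cases hau : G a u
  · exact ⟨b, hab.subset (by simp), hadj.2.resolve_right fun hbu => hncol ⟨hau, hbu⟩⟩
  · exact ⟨a, hab.subset (by simp), hadj.1.resolve_left hau⟩

theorem IsPath.activeGiven_union_singleton {p : List V} {X Y r : V} {Z : Set V}
    (hdag : IsDAG G) (hp : IsPath G p X Y) (hreach : ∀ u ∈ p, ReflTransGen G u r)
    (hZ : ∀ u ∈ p, u ≠ X → u ≠ Y → u ≠ r → u ∉ Z) : ActiveGiven G p (Z ∪ {r}) := by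
  intro a u b hab
  have hu : u ∈ p := hab.subset (by simp)
  refine ⟨fun _ => ?_, fun hncol => ?_⟩
  · rcases reflTransGen_iff_eq_or_transGen.1 (hreach u hu) with rfl | hur
    · exact Or.inl (Or.inr rfl)
    · exact Or.inr ⟨r, hur, Or.inr rfl⟩
  · obtain ⟨c, hc, huc⟩ := hp.exists_out_neighbor hab hncol
    have hur : u ≠ r := by
      rintro rfl
      exact hdag u (TransGen.head' huc (hreach c hc))
    rintro (huZ | rfl)
    · exact hZ u hu (hp.ne_left_of_infix hab) (hp.ne_right_of_infix hab) hur huZ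
    · exact hur rfl

theorem not_dSep_union_singleton_of_dirPathAvoid {X Y r : V} {Z : Set V} (hdag : IsDAG G)
    (hXr : DirPathAvoid G Z X r) (hYr : DirPathAvoid G Z Y r) : ¬ DSep G X Y (Z ∪ {r}) := by
  obtain ⟨q₁, hc₁, hX₁, hr₁, hZ₁⟩ := hXr
  obtain ⟨q₂, hc₂, hY₂, hr₂, hZ₂⟩ := hYr
  obtain ⟨l₁, rfl⟩ := List.getLast?_eq_some_iff.1 hr₁
  obtain ⟨l₂, rfl⟩ := List.getLast?_eq_some_iff.1 hr₂
  have hwalk : (l₁ ++ r :: l₂.reverse).IsChain (GAdj G) := by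
    refine List.isChain_split.2 ⟨hc₁.imp fun _ _ => Or.inl, ?_⟩
    simpa using (List.isChain_reverse (R := GAdj G)).2 (hc₂.imp fun _ _ => Or.inr)
  obtain ⟨p, hp, hpsub⟩ := exists_isPath_subset_of_isChain hwalk
    (by cases l₁ <;> simpa using hX₁)
    (by rw [List.getLast?_append_cons, ← hY₂, ← List.getLast?_reverse]; simp)
  have hmem : ∀ u ∈ p, u ∈ l₁ ++ [r] ∨ u ∈ l₂ ++ [r] := fun u hu => by
    have := hpsub hu
    simp only [List.mem_append, List.mem_cons, List.mem_reverse] at this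
    simp only [List.mem_append, List.mem_singleton]
    tauto
  refine fun hsep => hsep p hp (hp.activeGiven_union_singleton hdag (fun u hu => ?_)
    fun u hu hX hY hr => ?_)
  · rcases hmem u hu with h | h
    exacts [hc₁.reflTransGen_of_mem hr₁ h, hc₂.reflTransGen_of_mem hr₂ h]
  · rcases hmem u hu with h | h
    exacts [hZ₁ u h hX hr, hZ₂ u h hY hr]

end

theorem selfmasking_stability_and_collider_detection_general (G : V → V → Prop)
    (hdag : IsDAG G) (r v : V) (hleaf : IsLeaf G r) (hpar : UniqueParent G v r)
    (X Y : V) (Z : Set V) (hv : v ∈ Z)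
    (hX : X ∉ Z ∪ {r}) (hY : Y ∉ Z ∪ {r})
    (hsep : DSep G X Y Z) :
    DSep G X Y (Z ∪ {r}) ∧
      ∀ r' : V, r' ∉ Z → r' ≠ X → r' ≠ Y →
        (∃ a b, a ≠ b ∧ G a r' ∧ G b r') →
        DirPathAvoid G Z X r' → DirPathAvoid G Z Y r' →
        ¬ DSep G X Y (Z ∪ {r'}) :=
  ⟨dSep_union_singleton_of_isLeaf hleaf hpar hv (fun h => hX (Or.inr h.symm))
      (fun h => hY (Or.inr h.symm)) hsep,
    fun _ _ _ _ _ hXr hYr => not_dSep_union_singleton_of_dirPathAvoid hdag hXr hYr⟩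

/-- Stability of d-separation under conditioning on a weak self-masking
indicator, together with the collider-detection criterion: a non-self-masking
indicator that is a common descendant via Z-avoiding directed paths opens a
dependence. -/
theorem selfmasking_stability_and_collider_detection (G : V → V → Prop)
    (hdag : IsDAG G) (r v : V) (hleaf : IsLeaf G r) (hpar : UniqueParent G v r)
    (X Y : V) (hXY : X ≠ Y) (Z : Set V) (hv : v ∈ Z)
    (hX : X ∉ Z ∪ {r}) (hY : Y ∉ Z ∪ {r})
    (hsep : DSep G X Y Z) :
    DSep G X Y (Z ∪ {r}) ∧
      ∀ r' : V, r' ∉ Z → r' ≠ X → r' ≠ Y →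
        (∃ a b, a ≠ b ∧ G a r' ∧ G b r') →
        DirPathAvoid G Z X r' → DirPathAvoid G Z Y r' →
        ¬ DSep G X Y (Z ∪ {r'}) :=
  selfmasking_stability_and_collider_detection_general G hdag r v hleaf hpar X Y Z hv hX hY hsep
end

section
/- Let (X, ε) be independent random variables and R binary with joint density/mass factorizing as p(x, e, r) = p_X(x)·p_ε(e)·p_{R|X,ε}(r | x, e). Define the selection-biased measure Q(A × B) := P(X ∈ A, ε ∈ B | R = 0). Then Q is a product measure if and only if the function (x, e) ↦ p_{R|X,ε}(0 | x, e) equals a product a(x)·b(e) for P_X ⊗ P_ε-almost every (x, e), assuming p_{R|X,ε}(0 | x, e) > 0 a.e. -/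
open MeasureTheory ProbabilityTheory
open scoped ENNReal

/-- Auxiliary: set-integral of a product density over a rectangle factorizes. -/
lemma rect_lintegral_mul {α β : Type*} [MeasurableSpace α] [MeasurableSpace β]
    (μ : Measure α) (ν : Measure β) [SFinite μ] [SigmaFinite ν]
    {f : α → ℝ≥0∞} {g : β → ℝ≥0∞} (hf : Measurable f) (hg : Measurable g)
    (A : Set α) (B : Set β) :
    ∫⁻ p in A ×ˢ B, f p.1 * g p.2 ∂(μ.prod ν) =
      (∫⁻ x in A, f x ∂μ) * ∫⁻ y in B, g y ∂ν := by
  rw [← Measure.prod_restrict, lintegral_prod_mul hf.aemeasurable hg.aemeasurable]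

/-- Exact characterization underlying Theorem 3: the selection-biased joint
law of (X, ε) given R = 0 is a product measure if and only if the selection
probability h factorizes multiplicatively almost everywhere with respect to
the product of the laws of X and ε. -/
theorem selection_bias_product_iff_multiplicative
    {Ω : Type*} [MeasurableSpace Ω] (μ : Measure Ω) [IsProbabilityMeasure μ]
    (X ε : Ω → ℝ) (hX : Measurable X) (hε : Measurable ε)
    (hind : IndepFun X ε μ)
    (R0 : Set Ω) (hR0 : MeasurableSet R0) (hR0pos : μ R0 ≠ 0)
    (h : ℝ → ℝ → ℝ) (hh : Measurable fun q : ℝ × ℝ => h q.1 q.2)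
    (hpos : ∀ᵐ q ∂((μ.map X).prod (μ.map ε)), 0 < h q.1 q.2)
    (hcond : ∀ A B : Set ℝ, MeasurableSet A → MeasurableSet B →
      μ (R0 ∩ X ⁻¹' A ∩ ε ⁻¹' B) =
        ∫⁻ ω in X ⁻¹' A ∩ ε ⁻¹' B, ENNReal.ofReal (h (X ω) (ε ω)) ∂μ) :
    (∃ Q₁ Q₂ : Measure ℝ, IsProbabilityMeasure Q₁ ∧ IsProbabilityMeasure Q₂ ∧
        ∀ A B : Set ℝ, MeasurableSet A → MeasurableSet B →
          μ (R0 ∩ X ⁻¹' A ∩ ε ⁻¹' B) / μ R0 = Q₁ A * Q₂ B) ↔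
      (∃ a b : ℝ → ℝ, Measurable a ∧ Measurable b ∧
        ∀ᵐ q ∂((μ.map X).prod (μ.map ε)), h q.1 q.2 = a q.1 * b q.2) := by
  set ν₁ : Measure ℝ := μ.map X with hν₁
  set ν₂ : Measure ℝ := μ.map ε with hν₂
  have hprob₁ : IsProbabilityMeasure ν₁ := Measure.isProbabilityMeasure_map hX.aemeasurable
  have hprob₂ : IsProbabilityMeasure ν₂ := Measure.isProbabilityMeasure_map hε.aemeasurable
  have hmap : μ.map (fun ω => (X ω, ε ω)) = ν₁.prod ν₂ :=
    (indepFun_iff_map_prod_eq_prod_map_map hX.aemeasurable hε.aemeasurable).mp hind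
  set g : ℝ × ℝ → ℝ≥0∞ := fun q => ENNReal.ofReal (h q.1 q.2) with hg
  have hgm : Measurable g := hh.ennreal_ofReal
  set ρ : Measure (ℝ × ℝ) := (ν₁.prod ν₂).withDensity g with hρ
  have hR0fin : μ R0 ≠ ∞ := measure_ne_top μ R0
  -- rectangle values of ρ
  have key : ∀ A B : Set ℝ, MeasurableSet A → MeasurableSet B →
      ρ (A ×ˢ B) = μ (R0 ∩ X ⁻¹' A ∩ ε ⁻¹' B) := by
    intro A B hA hB
    rw [hρ, withDensity_apply _ (hA.prod hB), ← hmap,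
      setLIntegral_map (hA.prod hB) hgm (hX.prodMk hε), hcond A B hA hB,
      Set.mk_preimage_prod]
  have hρuniv : ρ Set.univ = μ R0 := by
    have := key Set.univ Set.univ MeasurableSet.univ MeasurableSet.univ
    simpa using this
  constructor
  · -- forward direction
    rintro ⟨Q₁, Q₂, hQ₁, hQ₂, hQ⟩
    haveI := hQ₁; haveI := hQ₂
    -- ρ = μ R0 • (Q₁.prod Q₂)
    have hprodeq : Q₁.prod Q₂ = (μ R0)⁻¹ • ρ := by
      refine Measure.prod_eq fun A B hA hB => ?_
      have hq := hQ A B hA hB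
      rw [ENNReal.div_eq_inv_mul] at hq
      rw [Measure.smul_apply, smul_eq_mul, key A B hA hB]
      exact hq
    have hρeq : ρ = μ R0 • (Q₁.prod Q₂) := by
      rw [hprodeq, smul_smul, ENNReal.mul_inv_cancel hR0pos hR0fin, one_smul]
    -- absolute continuity of Q₁, Q₂
    have hac₁ : Q₁ ≪ ν₁ := by
      refine Measure.AbsolutelyContinuous.mk fun s hs hs0 => ?_
      have h0 : (ν₁.prod ν₂) (s ×ˢ (Set.univ : Set ℝ)) = 0 := by
        rw [Measure.prod_prod, hs0, zero_mul]
      have hρ0 : ρ (s ×ˢ (Set.univ : Set ℝ)) = 0 :=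
        withDensity_absolutelyContinuous (ν₁.prod ν₂) g h0
      rw [hρeq, Measure.smul_apply, smul_eq_mul, Measure.prod_prod, measure_univ, mul_one]
        at hρ0
      exact (mul_eq_zero.mp hρ0).resolve_left hR0pos
    have hac₂ : Q₂ ≪ ν₂ := by
      refine Measure.AbsolutelyContinuous.mk fun s hs hs0 => ?_
      have h0 : (ν₁.prod ν₂) ((Set.univ : Set ℝ) ×ˢ s) = 0 := by
        rw [Measure.prod_prod, hs0, mul_zero]
      have hρ0 : ρ ((Set.univ : Set ℝ) ×ˢ s) = 0 :=
        withDensity_absolutelyContinuous (ν₁.prod ν₂) g h0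
      rw [hρeq, Measure.smul_apply, smul_eq_mul, Measure.prod_prod, measure_univ, one_mul]
        at hρ0
      exact (mul_eq_zero.mp hρ0).resolve_left hR0pos
    set f₁ : ℝ → ℝ≥0∞ := Q₁.rnDeriv ν₁ with hf₁
    set f₂ : ℝ → ℝ≥0∞ := Q₂.rnDeriv ν₂ with hf₂
    have hf₁m : Measurable f₁ := Measure.measurable_rnDeriv _ _
    have hf₂m : Measurable f₂ := Measure.measurable_rnDeriv _ _
    have hQ₁d : ν₁.withDensity f₁ = Q₁ := Measure.withDensity_rnDeriv_eq _ _ hac₁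
    have hQ₂d : ν₂.withDensity f₂ = Q₂ := Measure.withDensity_rnDeriv_eq _ _ hac₂
    -- Q₁.prod Q₂ as a withDensity measure
    have hprodd : Q₁.prod Q₂ = (ν₁.prod ν₂).withDensity (fun q => f₁ q.1 * f₂ q.2) := by
      refine Measure.prod_eq fun A B hA hB => ?_
      rw [withDensity_apply _ (hA.prod hB), rect_lintegral_mul _ _ hf₁m hf₂m,
        ← withDensity_apply _ hA, ← withDensity_apply _ hB, hQ₁d, hQ₂d]
    have hρd : ρ = (ν₁.prod ν₂).withDensity (fun q => μ R0 * (f₁ q.1 * f₂ q.2)) := by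
      rw [hρeq, hprodd, ← withDensity_smul' (μ R0) _ hR0fin]
      rfl
    have hgint : ∫⁻ q, g q ∂(ν₁.prod ν₂) ≠ ∞ := by
      have : ∫⁻ q, g q ∂(ν₁.prod ν₂) = ρ Set.univ := by
        rw [hρ, withDensity_apply _ MeasurableSet.univ, Measure.restrict_univ]
      rw [this, hρuniv]; exact hR0fin
    have hae : g =ᵐ[ν₁.prod ν₂] fun q => μ R0 * (f₁ q.1 * f₂ q.2) :=
      (withDensity_eq_iff hgm.aemeasurable
        ((measurable_const.mul ((hf₁m.comp measurable_fst).mul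
          (hf₂m.comp measurable_snd))).aemeasurable) hgint).mp hρd
    have hf₁fin : ∀ᵐ q ∂(ν₁.prod ν₂), f₁ q.1 < ∞ := by
      have h1 := Measure.rnDeriv_lt_top Q₁ ν₁
      rw [ae_iff] at h1 ⊢
      have hset : {q : ℝ × ℝ | ¬ f₁ q.1 < ∞} = {x | ¬ f₁ x < ∞} ×ˢ (Set.univ : Set ℝ) := by
        ext q; simp [Set.mem_prod]
      rw [hset, Measure.prod_prod, h1, zero_mul]
    have hf₂fin : ∀ᵐ q ∂(ν₁.prod ν₂), f₂ q.2 < ∞ := by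
      have h2 := Measure.rnDeriv_lt_top Q₂ ν₂
      rw [ae_iff] at h2 ⊢
      have hset : {q : ℝ × ℝ | ¬ f₂ q.2 < ∞} = (Set.univ : Set ℝ) ×ˢ {x | ¬ f₂ x < ∞} := by
        ext q; simp [Set.mem_prod]
      rw [hset, Measure.prod_prod, h2, mul_zero]
    refine ⟨fun x => (μ R0).toReal * (f₁ x).toReal, fun e => (f₂ e).toReal,
      (measurable_const.mul hf₁m.ennreal_toReal), hf₂m.ennreal_toReal, ?_⟩
    filter_upwards [hae, hpos, hf₁fin, hf₂fin] with q heq hq hfin₁ hfin₂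
    have : h q.1 q.2 = (g q).toReal := by
      rw [hg]; exact (ENNReal.toReal_ofReal hq.le).symm
    rw [this, heq, ENNReal.toReal_mul, ENNReal.toReal_mul, mul_assoc]
  · -- reverse direction
    rintro ⟨a, b, ha, hb, hab⟩
    set f₁ : ℝ → ℝ≥0∞ := fun x => ENNReal.ofReal |a x| with hf₁
    set f₂ : ℝ → ℝ≥0∞ := fun e => ENNReal.ofReal |b e| with hf₂
    have hf₁m : Measurable f₁ := ha.abs.ennreal_ofReal
    have hf₂m : Measurable f₂ := hb.abs.ennreal_ofReal
    have hdens : g =ᵐ[ν₁.prod ν₂] fun q => f₁ q.1 * f₂ q.2 := by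
      filter_upwards [hab, hpos] with q h1 h2
      have habs : |a q.1| * |b q.2| = a q.1 * b q.2 := by
        rw [← abs_mul, abs_of_pos (h1 ▸ h2)]
      rw [hg]
      simp only [hf₁, hf₂]
      rw [← ENNReal.ofReal_mul (abs_nonneg _), habs, ← h1]
    have hρd : ρ = (ν₁.prod ν₂).withDensity (fun q => f₁ q.1 * f₂ q.2) :=
      withDensity_congr_ae hdens
    set m₁ : Measure ℝ := ν₁.withDensity f₁ with hm₁
    set m₂ : Measure ℝ := ν₂.withDensity f₂ with hm₂
    have hrect : ∀ A B : Set ℝ, MeasurableSet A → MeasurableSet B →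
        ρ (A ×ˢ B) = m₁ A * m₂ B := by
      intro A B hA hB
      rw [hρd, withDensity_apply _ (hA.prod hB), rect_lintegral_mul _ _ hf₁m hf₂m,
        ← withDensity_apply _ hA, ← withDensity_apply _ hB]
    set c₁ : ℝ≥0∞ := m₁ Set.univ with hc₁
    set c₂ : ℝ≥0∞ := m₂ Set.univ with hc₂
    have hc : c₁ * c₂ = μ R0 := by
      rw [hc₁, hc₂, ← hrect Set.univ Set.univ MeasurableSet.univ MeasurableSet.univ,
        Set.univ_prod_univ, hρuniv]
    have hc₁0 : c₁ ≠ 0 := fun h0 => hR0pos (by rw [← hc, h0, zero_mul])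
    have hc₂0 : c₂ ≠ 0 := fun h0 => hR0pos (by rw [← hc, h0, mul_zero])
    have hc₁t : c₁ ≠ ∞ := by
      intro ht; exact hR0fin (by rw [← hc, ht, ENNReal.top_mul hc₂0])
    have hc₂t : c₂ ≠ ∞ := by
      intro ht; exact hR0fin (by rw [← hc, ht, ENNReal.mul_top hc₁0])
    refine ⟨c₁⁻¹ • m₁, c₂⁻¹ • m₂, ⟨?_⟩, ⟨?_⟩, ?_⟩
    · rw [Measure.smul_apply, smul_eq_mul, ← hc₁, ENNReal.inv_mul_cancel hc₁0 hc₁t]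
    · rw [Measure.smul_apply, smul_eq_mul, ← hc₂, ENNReal.inv_mul_cancel hc₂0 hc₂t]
    · intro A B hA hB
      rw [← key A B hA hB, hrect A B hA hB, Measure.smul_apply, Measure.smul_apply,
        smul_eq_mul, smul_eq_mul, ← hc, ENNReal.div_eq_inv_mul,
        ENNReal.mul_inv (Or.inl hc₁0) (Or.inl hc₁t)]
      ring
end

section
/- Let X, N be independent random variables with N having a density, and Y := f(X) + N. Let R_X be binary with P(R_X = 1 | X = x) = σ(x) for a measurable σ. Then the conditional distribution of (X, Y) given R_X = 0 still satisfies an additive noise model with the same f and the same noise law: there exists a random variable X' with law L(X | R_X = 0) and N' ⫫ X' with L(N') = L(N) such that (X, Y) | {R_X = 0} has the same law as (X', f(X') + N'). -/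
open MeasureTheory ProbabilityTheory

/-- Self-masking of the cause preserves the ANM: if Y = f(X) + N with X ⫫ N,
N having a density, and the missingness of X depends only on X (via σ), then
conditional on R_X = 0 the pair (X, Y) still follows an additive noise model
with the same f and the same noise law. -/
theorem selfmasking_cause_preserves_anm
    {Ω : Type*} [MeasurableSpace Ω] (μ : Measure Ω) [IsProbabilityMeasure μ]
    (X N : Ω → ℝ) (hX : Measurable X) (hN : Measurable N)
    (hind : IndepFun X N μ) [MeasureTheory.HasPDF N μ]
    (f σ : ℝ → ℝ) (hf : Measurable f) (hσ : Measurable σ)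
    (Y : Ω → ℝ) (hY : ∀ ω, Y ω = f (X ω) + N ω)
    (R0 : Set Ω) (hR0 : MeasurableSet R0) (hR0pos : μ R0 ≠ 0)
    (hcond : ∀ A B : Set ℝ, MeasurableSet A → MeasurableSet B →
      μ (R0 ∩ X ⁻¹' A ∩ N ⁻¹' B) =
        ∫⁻ ω in X ⁻¹' A ∩ N ⁻¹' B, ENNReal.ofReal (1 - σ (X ω)) ∂μ) :
    ∃ (Ω' : Type) (_ : MeasurableSpace Ω') (μ' : Measure Ω') (X' N' : Ω' → ℝ),
      IsProbabilityMeasure μ' ∧ Measurable X' ∧ Measurable N' ∧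
      IndepFun X' N' μ' ∧
      μ'.map X' = (μ[|R0]).map X ∧
      μ'.map N' = μ.map N ∧
      μ'.map (fun ω => (X' ω, f (X' ω) + N' ω)) =
        (μ[|R0]).map (fun ω => (X ω, Y ω)) := by
  set ν := μ[|R0] with hν
  have hνprob : IsProbabilityMeasure ν := cond_isProbabilityMeasure hR0pos
  set g : ℝ → ENNReal := fun x => ENNReal.ofReal (1 - σ x) with hg
  have hgm : Measurable g := (measurable_const.sub hσ).ennreal_ofReal
  -- Factorization of the masked measure on rectangles
  have hfact : ∀ A B : Set ℝ, MeasurableSet A → MeasurableSet B →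
      μ (R0 ∩ X ⁻¹' A ∩ N ⁻¹' B) = μ (R0 ∩ X ⁻¹' A) * μ (N ⁻¹' B) := by
    intro A B hA hB
    have hAuniv := hcond A Set.univ hA MeasurableSet.univ
    simp only [Set.preimage_univ, Set.inter_univ] at hAuniv
    rw [hcond A B hA hB, hAuniv]
    have hφ : Measurable (A.indicator g) := hgm.indicator hA
    have hψ : Measurable (B.indicator (fun _ : ℝ => (1 : ENNReal))) :=
      measurable_const.indicator hB
    have hindFG : IndepFun (fun ω => A.indicator g (X ω))
        (fun ω => B.indicator (fun _ => (1 : ENNReal)) (N ω)) μ := hind.comp hφ hψ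
    have hmul := lintegral_mul_eq_lintegral_mul_lintegral_of_indepFun
      (hφ.comp hX) (hψ.comp hN) hindFG
    have e1 : (A.indicator g ∘ X) * (B.indicator (fun _ => (1 : ENNReal)) ∘ N)
        = (X ⁻¹' A ∩ N ⁻¹' B).indicator (fun ω => g (X ω)) := by
      funext ω
      by_cases h1 : X ω ∈ A <;> by_cases h2 : N ω ∈ B <;>
        simp [Set.indicator, Function.comp, h1, h2]
    have e2 : A.indicator g ∘ X = (X ⁻¹' A).indicator (fun ω => g (X ω)) := by
      funext ω
      by_cases h1 : X ω ∈ A <;> simp [Set.indicator, Function.comp, h1]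
    have e3 : B.indicator (fun _ => (1 : ENNReal)) ∘ N
        = (N ⁻¹' B).indicator (fun _ => (1 : ENNReal)) := by
      funext ω
      by_cases h2 : N ω ∈ B <;> simp [Set.indicator, Function.comp, h2]
    rw [e1, e2, e3, lintegral_indicator ((hA.preimage hX).inter (hB.preimage hN)),
      lintegral_indicator (hA.preimage hX), lintegral_indicator (hB.preimage hN),
      setLIntegral_one] at hmul
    exact hmul
  -- The masked joint law of (X, N) is a product measure
  have hmapX : AEMeasurable X ν := hX.aemeasurable
  have key : ν.map (fun ω => (X ω, N ω)) = (ν.map X).prod (μ.map N) := by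
    have : IsProbabilityMeasure (ν.map X) := Measure.isProbabilityMeasure_map hmapX
    have : IsProbabilityMeasure (μ.map N) := Measure.isProbabilityMeasure_map hN.aemeasurable
    refine (Measure.prod_eq fun A B hA hB => ?_).symm
    rw [Measure.map_apply (hX.prodMk hN) (hA.prod hB),
      Measure.map_apply hX hA, Measure.map_apply hN hB]
    have hpre : (fun ω => (X ω, N ω)) ⁻¹' A ×ˢ B = X ⁻¹' A ∩ N ⁻¹' B := rfl
    rw [hpre, hν, cond_apply hR0, cond_apply hR0, ← Set.inter_assoc, hfact A B hA hB,
      mul_assoc]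
  have : IsProbabilityMeasure (ν.map X) := Measure.isProbabilityMeasure_map hmapX
  have : IsProbabilityMeasure (μ.map N) := Measure.isProbabilityMeasure_map hN.aemeasurable
  set μ' : Measure (ℝ × ℝ) := (ν.map X).prod (μ.map N) with hμ'
  have hmapfst : μ'.map Prod.fst = ν.map X := by
    rw [hμ', Measure.map_fst_prod]; simp
  have hmapsnd : μ'.map Prod.snd = μ.map N := by
    rw [hμ', Measure.map_snd_prod]; simp
  refine ⟨ℝ × ℝ, inferInstance, μ', Prod.fst, Prod.snd, inferInstance,
    measurable_fst, measurable_snd, ?_, hmapfst, hmapsnd, ?_⟩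
  · rw [indepFun_iff_map_prod_eq_prod_map_map measurable_fst.aemeasurable
      measurable_snd.aemeasurable, hmapfst, hmapsnd]
    have : (fun ω : ℝ × ℝ => (ω.1, ω.2)) = id := rfl
    rw [this, Measure.map_id]
  · have hT : Measurable (fun p : ℝ × ℝ => (p.1, f p.1 + p.2)) :=
      measurable_fst.prodMk ((hf.comp measurable_fst).add measurable_snd)
    rw [← key, Measure.map_map hT (hX.prodMk hN)]
    congr 1
    funext ω
    simp [hY ω]
end
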